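/- arXiv:2201.11722 — 3 statements merged into one kernel-verified Lean document; each statement's English description precedes it below -/
import Mathlib

section
/- Let P be a Markov kernel on a measurable space X satisfying Doeblin's condition with constants (l, λ, φ). Define the second-order Markov kernel P̃ on X × X by letting P̃((x,y), ·) be the law of (y, Z) where Z ∼ P(y, ·). Then P̃ also satisfies Doeblin's condition; explicitly, for every (x,y) ∈ X × X and every measurable C ⊆ X × X, the (l+1)-step kernel satisfies P̃^{l+1}((x,y), C) ≥ λ (φ ⊗ P)(C), where φ ⊗ P is the probability measure on X × X given by (φ ⊗ P)(A × B) = ∫_A P(a,B) φ(da). -/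
open MeasureTheory ProbabilityTheory
open scoped ENNReal

/-- The `n`-step kernel `P^n` of a Markov kernel `P`. -/
noncomputable def kernelPow {X : Type*} [MeasurableSpace X] (P : Kernel X X) : ℕ → Kernel X X
  | 0 => Kernel.id
  | (n + 1) => Kernel.comp (kernelPow P n) P

instance kernelPow.instIsMarkovKernel {X : Type*} [MeasurableSpace X] (P : Kernel X X)
    [IsMarkovKernel P] : ∀ n, IsMarkovKernel (kernelPow P n)
  | 0 => by rw [kernelPow]; infer_instance
  | (n + 1) => by
      rw [kernelPow]
      have := kernelPow.instIsMarkovKernel P n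
      infer_instance

/-- Let `P` be a Markov kernel on a measurable space `X` satisfying Doeblin's
condition with constants `(l, lam, φ)`, i.e. `P^l (x, A) ≥ lam * φ A` for every `x` and every
measurable `A`.  Let `Pt` be the second-order kernel on `X × X`, `Pt ((x, y), ·)` being the law
of `(y, Z)` with `Z ∼ P (y, ·)`.  Then `Pt` satisfies Doeblin's condition: its `(l+1)`-step
kernel satisfies `Pt^(l+1) ((x, y), C) ≥ lam * (φ ⊗ P) C` for every `(x, y)` and measurable
`C ⊆ X × X`. -/
theorem secondOrder_doeblin
    {X : Type*} [MeasurableSpace X]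
    (P : Kernel X X) [IsMarkovKernel P]
    (l : ℕ) (hl : 1 ≤ l) (lam : ℝ≥0∞) (hlam : 0 < lam)
    (φ : Measure X) [IsProbabilityMeasure φ]
    (hDoeblin : ∀ (x : X) (A : Set X), MeasurableSet A → lam * φ A ≤ kernelPow P l x A)
    (Pt : Kernel (X × X) (X × X)) [IsMarkovKernel Pt]
    (hPt : ∀ p : X × X, Pt p = (P p.2).map (fun z => (p.2, z))) :
    ∀ (p : X × X) (C : Set (X × X)), MeasurableSet C →
      lam * (φ ⊗ₘ P) C ≤ kernelPow Pt (l + 1) p C := by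
  set κP : Kernel X (X × X) := Kernel.id ×ₖ P with hκPdef
  set d : Kernel (X × X) X := Kernel.deterministic Prod.snd measurable_snd with hd
  have hκP_apply : ∀ a : X, κP a = (P a).map (Prod.mk a) := by
    intro a
    rw [hκPdef, Kernel.prod_apply, Kernel.id_apply, Measure.dirac_prod]
  have hPt' : Pt = κP ∘ₖ d := by
    ext p s hs
    rw [hd, Kernel.comp_deterministic_eq_comap, Kernel.comap_apply, hκP_apply, hPt]
  have hsnd : d ∘ₖ κP = P := by
    rw [hd, Kernel.deterministic_comp_eq_map]
    ext a s hs
    rw [Kernel.map_apply _ measurable_snd, hκP_apply,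
      Measure.map_map measurable_snd measurable_prodMk_left]
    simp
  have key : ∀ n : ℕ, kernelPow Pt (n + 1) = (κP ∘ₖ kernelPow P n) ∘ₖ d := by
    intro n
    induction n with
    | zero =>
      show Kernel.id ∘ₖ Pt = (κP ∘ₖ Kernel.id) ∘ₖ d
      rw [Kernel.id_comp, Kernel.comp_id, hPt']
    | succ n ih =>
      show kernelPow Pt (n + 1) ∘ₖ Pt = (κP ∘ₖ (kernelPow P n ∘ₖ P)) ∘ₖ d
      rw [ih, hPt', Kernel.comp_assoc (κP ∘ₖ kernelPow P n) d (κP ∘ₖ d),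
        ← Kernel.comp_assoc d κP d, hsnd,
        ← Kernel.comp_assoc (κP ∘ₖ kernelPow P n) P d,
        Kernel.comp_assoc κP (kernelPow P n) P]
  intro p C hC
  have h1 : kernelPow Pt (l + 1) p C = ∫⁻ a, κP a C ∂(kernelPow P l p.2) := by
    rw [key l, hd, Kernel.comp_deterministic_eq_comap, Kernel.comap_apply,
      Kernel.comp_apply' _ _ _ hC]
  have h2 : lam * (φ ⊗ₘ P) C = ∫⁻ a, κP a C ∂(lam • φ) := by
    rw [lintegral_smul_measure, Measure.compProd_apply hC]
    congr 1
    refine lintegral_congr fun a => ?_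
    rw [hκP_apply, Measure.map_apply measurable_prodMk_left hC]
  rw [h1, h2]
  refine lintegral_mono' ?_ le_rfl
  rw [Measure.le_iff]
  intro s hs
  rw [Measure.smul_apply, smul_eq_mul]
  exact hDoeblin p.2 s hs
end

section
/- Nonnegativity of the squared maximum mean discrepancy: Let Z be a measurable space and k : Z × Z → ℝ a bounded measurable symmetric kernel that is positive semidefinite, i.e. ∑_{i,j=1}^N c_i c_j k(z_i, z_j) ≥ 0 for every N, all points z_1,…,z_N ∈ Z and all reals c_1,…,c_N. Then for all probability measures μ, ν on Z, D_k(μ, ν) := ∬ k d(μ⊗μ) − 2∬ k d(μ⊗ν) + ∬ k d(ν⊗ν) ≥ 0. -/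
open MeasureTheory ProbabilityTheory

/-!
Sample `N` independent pairs `(Xᵢ, Yᵢ)` from `μ ⊗ ν` and apply positive semidefiniteness of `k`
with weight `1` at every `Xᵢ` and `-1` at every `Yᵢ`. The resulting nonnegative random variable has
expectation `N (N - 1) D_k(μ, ν) + N c` for a constant `c` coming from the diagonal terms, so
dividing by `N²` and letting `N → ∞` gives `D_k(μ, ν) ≥ 0`.
-/

lemma nonneg_of_forall_natCast_mul_add_nonneg {a b : ℝ} (h : ∀ n : ℕ, 0 ≤ n * a + b) :
    0 ≤ a := by
  by_contra! ha
  obtain ⟨n, hn⟩ := exists_nat_gt (b / -a)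
  rw [div_lt_iff₀ (neg_pos.mpr ha)] at hn
  linarith [h n]

lemma Fin.sum_sum_ite_eq {n : ℕ} (d I : ℝ) :
    ∑ i : Fin (n + 1), ∑ j : Fin (n + 1), (if i = j then d else I) = (n + 1) * (n * I + d) := by
  simp [Finset.sum_ite, Finset.filter_eq, Finset.filter_ne, Finset.card_erase_of_mem]
  ring

section

variable {α β γ : Type*} [MeasurableSpace α] [MeasurableSpace β] [MeasurableSpace γ]

lemma integrable_comp_of_abs_le {P : Measure β} [IsFiniteMeasure P] {F : α → α → ℝ}
    (hF : Measurable (Function.uncurry F)) {C : ℝ} (hC : ∀ x y, |F x y| ≤ C) {f g : β → α}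
    (hf : Measurable f) (hg : Measurable g) :
    Integrable (fun ω => F (f ω) (g ω)) P :=
  .of_bound (hF.comp (hf.prodMk hg)).aestronglyMeasurable C (ae_of_all _ fun _ => hC _ _)

lemma map_pi_apply_pair {ι : Type*} [Fintype ι] (π : Measure α) [IsProbabilityMeasure π]
    {i j : ι} (hij : i ≠ j) :
    (Measure.pi fun _ : ι => π).map (fun ω => (ω i, ω j)) = π.prod π := by
  have hindep := (iIndepFun_pi (μ := fun _ : ι => π) (X := fun _ => id)
    fun _ => aemeasurable_id).indepFun hij
  rw [hindep.map_prod_eq_prod_map_map (measurable_pi_apply i).aemeasurable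
    (measurable_pi_apply j).aemeasurable, (measurePreserving_eval _ i).map_eq,
    (measurePreserving_eval _ j).map_eq]

lemma integral_pi_apply_apply {ι : Type*} [Fintype ι] [DecidableEq ι] (π : Measure α)
    [IsProbabilityMeasure π] {F : α → α → ℝ} (hF : Measurable (Function.uncurry F)) (i j : ι) :
    ∫ ω, F (ω i) (ω j) ∂(Measure.pi fun _ : ι => π)
      = if i = j then ∫ x, F x x ∂π else ∫ p, F p.1 p.2 ∂(π.prod π) := by
  split_ifs with hij
  · subst hij
    exact integral_comp_eval (X := fun _ => α) (f := fun x => F x x)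
      (hF.comp (measurable_id.prodMk measurable_id)).aestronglyMeasurable
  · rw [← map_pi_apply_pair π hij, integral_map
      ((measurable_pi_apply i).prodMk (measurable_pi_apply j)).aemeasurable
      hF.aestronglyMeasurable]

theorem integral_prod_self_nonneg_of_sum_nonneg (π : Measure α) [IsProbabilityMeasure π]
    {F : α → α → ℝ} (hF : Measurable (Function.uncurry F)) {C : ℝ} (hC : ∀ x y, |F x y| ≤ C)
    (hsum : ∀ (N : ℕ) (x : Fin N → α), 0 ≤ ∑ i, ∑ j, F (x i) (x j)) :
    0 ≤ ∫ p, F p.1 p.2 ∂(π.prod π) := by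
  set I := ∫ p, F p.1 p.2 ∂(π.prod π)
  set d := ∫ x, F x x ∂π
  refine nonneg_of_forall_natCast_mul_add_nonneg (b := d) fun N => ?_
  have hint (i j : Fin (N + 1)) : Integrable (fun ω : Fin (N + 1) → α => F (ω i) (ω j))
      (Measure.pi fun _ => π) :=
    integrable_comp_of_abs_le hF hC (measurable_pi_apply i) (measurable_pi_apply j)
  have hexp : ∫ ω, ∑ i, ∑ j, F (ω i) (ω j) ∂(Measure.pi fun _ : Fin (N + 1) => π)
      = (N + 1) * (N * I + d) := by
    rw [integral_finsetSum _ fun i _ => integrable_finsetSum _ fun j _ => hint i j]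
    simp_rw [integral_finsetSum _ fun j _ => hint _ j, integral_pi_apply_apply π hF]
    exact Fin.sum_sum_ite_eq d I
  have hexp_nonneg := hexp ▸ integral_nonneg fun ω => hsum _ ω
  exact nonneg_of_mul_nonneg_right hexp_nonneg (by positivity)

lemma integral_prod_comp_map (ρ : Measure β) (σ : Measure γ) [SFinite ρ] [SFinite σ]
    {f : β → α} {g : γ → α} (hf : Measurable f) (hg : Measurable g) {G : α → α → ℝ}
    (hG : Measurable (Function.uncurry G)) :
    ∫ p, G (f p.1) (g p.2) ∂(ρ.prod σ) = ∫ q, G q.1 q.2 ∂((ρ.map f).prod (σ.map g)) := by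
  rw [Measure.map_prod_map _ _ hf hg,
    integral_map (f := fun q => G q.1 q.2) (hf.prodMap hg).aemeasurable hG.aestronglyMeasurable]
  rfl

lemma integral_prod_comm_of_symm {k : α → α → ℝ} (hk_symm : ∀ x y, k x y = k y x)
    (μ ν : Measure α) [SFinite μ] [SFinite ν] :
    ∫ p, k p.1 p.2 ∂(ν.prod μ) = ∫ p, k p.1 p.2 ∂(μ.prod ν) := by
  rw [← integral_prod_swap]
  simp only [Prod.fst_swap, Prod.snd_swap, hk_symm]

end

/-- For a feature map `φ` of `k`, this is `⟪φ x - φ y, φ x' - φ y'⟫` at `((x, y), (x', y'))`. -/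
def diffKernel {Z : Type*} (k : Z → Z → ℝ) (p q : Z × Z) : ℝ :=
  k p.1 q.1 - k p.1 q.2 - k p.2 q.1 + k p.2 q.2

section

variable {Z : Type*} {k : Z → Z → ℝ}

lemma abs_diffKernel_le {C : ℝ} (hk_bdd : ∀ x y, |k x y| ≤ C) (p q : Z × Z) :
    |diffKernel k p q| ≤ 4 * C := by
  have h₁ := abs_le.mp (hk_bdd p.1 q.1)
  have h₂ := abs_le.mp (hk_bdd p.1 q.2)
  have h₃ := abs_le.mp (hk_bdd p.2 q.1)
  have h₄ := abs_le.mp (hk_bdd p.2 q.2)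
  rw [diffKernel, abs_le]
  constructor <;> linarith

lemma measurable_diffKernel [MeasurableSpace Z] (hk_meas : Measurable (Function.uncurry k)) :
    Measurable (Function.uncurry (diffKernel k)) := by
  unfold diffKernel
  fun_prop

lemma sum_sum_diffKernel_nonneg
    (hk_psd : ∀ (N : ℕ) (z : Fin N → Z) (c : Fin N → ℝ), 0 ≤ ∑ i, ∑ j, c i * c j * k (z i) (z j))
    (N : ℕ) (x : Fin N → Z × Z) : 0 ≤ ∑ i, ∑ j, diffKernel k (x i) (x j) := by
  have h := hk_psd (N + N) (Fin.append (fun i => (x i).1) (fun i => (x i).2))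
    (Fin.append (fun _ => 1) (fun _ => -1))
  simp only [Fin.sum_univ_add, Fin.append_left, Fin.append_right, one_mul, mul_one,
    neg_mul, mul_neg, neg_neg] at h
  refine h.trans_eq ?_
  simp only [diffKernel, Finset.sum_add_distrib, Finset.sum_sub_distrib, Finset.sum_neg_distrib]
  ring

lemma integral_diffKernel [MeasurableSpace Z] (hk_meas : Measurable (Function.uncurry k))
    {C : ℝ} (hk_bdd : ∀ x y, |k x y| ≤ C) (hk_symm : ∀ x y, k x y = k y x)
    (μ ν : Measure Z) [IsProbabilityMeasure μ] [IsProbabilityMeasure ν] :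
    ∫ p, diffKernel k p.1 p.2 ∂((μ.prod ν).prod (μ.prod ν))
      = (∫ p, k p.1 p.2 ∂(μ.prod μ)) - 2 * (∫ p, k p.1 p.2 ∂(μ.prod ν))
        + ∫ p, k p.1 p.2 ∂(ν.prod ν) := by
  set P := (μ.prod ν).prod (μ.prod ν)
  have h11 : Integrable (fun p => k p.1.1 p.2.1) P :=
    integrable_comp_of_abs_le hk_meas hk_bdd (by fun_prop) (by fun_prop)
  have h12 : Integrable (fun p => k p.1.1 p.2.2) P :=
    integrable_comp_of_abs_le hk_meas hk_bdd (by fun_prop) (by fun_prop)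
  have h21 : Integrable (fun p => k p.1.2 p.2.1) P :=
    integrable_comp_of_abs_le hk_meas hk_bdd (by fun_prop) (by fun_prop)
  have h22 : Integrable (fun p => k p.1.2 p.2.2) P :=
    integrable_comp_of_abs_le hk_meas hk_bdd (by fun_prop) (by fun_prop)
  simp only [diffKernel]
  rw [integral_add, integral_sub, integral_sub,
    integral_prod_comp_map _ _ measurable_fst measurable_fst hk_meas,
    integral_prod_comp_map _ _ measurable_fst measurable_snd hk_meas,
    integral_prod_comp_map _ _ measurable_snd measurable_fst hk_meas,
    integral_prod_comp_map _ _ measurable_snd measurable_snd hk_meas]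
  · simp only [Measure.map_fst_prod, Measure.map_snd_prod, measure_univ, one_smul,
      integral_prod_comm_of_symm hk_symm μ ν]
    ring
  exacts [h11, h12, h11.sub h12, h21, (h11.sub h12).sub h21, h22]

end

/-- **Nonnegativity of the squared maximum mean discrepancy.**  Let `k` be a
bounded measurable symmetric positive semidefinite kernel on a measurable space `Z`.  Then for
all probability measures `μ`, `ν` on `Z`,
`D_k (μ, ν) = ∬ k d(μ ⊗ μ) - 2 ∬ k d(μ ⊗ ν) + ∬ k d(ν ⊗ ν) ≥ 0`. -/
theorem squared_mmd_nonneg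
    {Z : Type*} [MeasurableSpace Z]
    (k : Z → Z → ℝ) (hk_meas : Measurable (Function.uncurry k))
    (C : ℝ) (hk_bdd : ∀ x y, |k x y| ≤ C)
    (hk_symm : ∀ x y, k x y = k y x)
    (hk_psd : ∀ (N : ℕ) (z : Fin N → Z) (c : Fin N → ℝ),
      0 ≤ ∑ i, ∑ j, c i * c j * k (z i) (z j))
    (μ ν : Measure Z) [IsProbabilityMeasure μ] [IsProbabilityMeasure ν] :
    0 ≤ (∫ p, k p.1 p.2 ∂(μ.prod μ)) - 2 * (∫ p, k p.1 p.2 ∂(μ.prod ν))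
        + (∫ p, k p.1 p.2 ∂(ν.prod ν)) := by
  rw [← integral_diffKernel hk_meas hk_bdd hk_symm μ ν]
  exact integral_prod_self_nonneg_of_sum_nonneg (μ.prod ν) (measurable_diffKernel hk_meas)
    (abs_diffKernel_le hk_bdd) (sum_sum_diffKernel_nonneg hk_psd)
end

section
/- Asymptotics of the implicit threshold equation: Fix a real M ≥ 0. For every c > 0 there exists a unique real L = L(c) > M satisfying L = M + exp(c / L); this L satisfies L · log(L − M) = c, and moreover L(c) · log L(c) / c → 1 as c → ∞ (equivalently, L log L = c (1 + o(1))). Consequently, L(c) ≤ (c / log c)(1 + o(1)) as c → ∞. -/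
/-!
Existence and uniqueness: `x ↦ x - exp (c / x)` is continuous and strictly increasing on
`(0, ∞)`, so it takes the value `M` exactly once, by the intermediate value theorem.

Asymptotics: taking logarithms, `L * log (L - M) = c`, and `c ≤ L ^ 2` forces `L → ∞`.
Then `log L / log (L - M) → 1`, which is `L log L / c → 1`; inverting this relation gives
`log c / log L → 1`, so `L log c / c → 1`, which is the required bound with `g c = L log c / c`.
-/

open Filter Real Set Topology

theorem strictMonoOn_sub_exp_div {c : ℝ} (hc : 0 ≤ c) :
    StrictMonoOn (fun x => x - exp (c / x)) (Ioi 0) := by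
  intro x hx y _ hxy
  have : exp (c / y) ≤ exp (c / x) := exp_le_exp.mpr (div_le_div_of_nonneg_left hc hx hxy.le)
  linarith

theorem exists_eq_add_exp_div {M c : ℝ} (hM : -1 < M) (hc : 0 ≤ c) :
    ∃ L, M < L ∧ L = M + exp (c / L) := by
  set E := exp (c / (M + 1))
  have hE : 1 ≤ E := one_le_exp (div_nonneg hc (by linarith))
  have hcont : ContinuousOn (fun x => x - exp (c / x)) (Icc (M + 1) (M + E)) :=
    continuousOn_id.sub <| continuous_exp.comp_continuousOn <|
      continuousOn_const.div continuousOn_id fun x hx => (by linarith [hx.1] : (0 : ℝ) < x).ne'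
  have hmem : M ∈ Icc (M + 1 - E) (M + E - exp (c / (M + E))) := by
    have : exp (c / (M + E)) ≤ E :=
      exp_le_exp.mpr (div_le_div_of_nonneg_left hc (by linarith) (by linarith))
    constructor <;> linarith
  obtain ⟨L, hL, hLM⟩ := intermediate_value_Icc (by linarith) hcont hmem
  exact ⟨L, by linarith [hL.1], by simp only at hLM; linarith⟩

theorem existsUnique_eq_add_exp_div {M c : ℝ} (hM : 0 ≤ M) (hc : 0 ≤ c) :
    ∃! L, M < L ∧ L = M + exp (c / L) := by
  obtain ⟨L, hML, hL⟩ := exists_eq_add_exp_div (M := M) (by linarith) hc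
  refine ⟨L, ⟨hML, hL⟩, fun L' ⟨hML', hL'⟩ => ?_⟩
  refine (strictMonoOn_sub_exp_div hc).injOn (by simpa using hM.trans_lt hML')
    (by simpa using hM.trans_lt hML) ?_
  linarith

theorem mul_log_sub_eq_of_eq_add_exp {M c L : ℝ} (hL : L ≠ 0) (h : L = M + exp (c / L)) :
    L * log (L - M) = c := by
  rw [show L - M = exp (c / L) by linarith, log_exp, mul_div_cancel₀ _ hL]

theorem le_sq_of_mul_log_sub_eq {M c L : ℝ} (hM : 0 ≤ M) (hL : M < L)
    (h : L * log (L - M) = c) : c ≤ L ^ 2 := by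
  have : log (L - M) ≤ L := by linarith [log_le_sub_one_of_pos (sub_pos.mpr hL)]
  rw [← h, sq]
  exact mul_le_mul_of_nonneg_left this (by linarith)

theorem tendsto_log_add_div_log (a : ℝ) :
    Tendsto (fun x => log (x + a) / log x) atTop (𝓝 1) := by
  have h := (tendsto_log_comp_add_sub_log a).div_atTop tendsto_log_atTop
  have heq : ∀ᶠ x in atTop, 1 + (log (x + a) - log x) / log x = log (x + a) / log x := by
    filter_upwards [tendsto_log_atTop.eventually_gt_atTop 0] with x hx
    field_simp
    ring
  simpa using (tendsto_const_nhds.add h).congr' heq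

/-- `log c = log (f c) + log (log (f c)) - log (f c * log (f c) / c)`, and the last two terms are
`o(log (f c))`. -/
theorem tendsto_log_div_log_of_tendsto_mul_log_div {f : ℝ → ℝ} (hf : Tendsto f atTop atTop)
    (h : Tendsto (fun c => f c * log (f c) / c) atTop (𝓝 1)) :
    Tendsto (fun c => log c / log (f c)) atTop (𝓝 1) := by
  have hlogf : Tendsto (fun c => log (f c)) atTop atTop := tendsto_log_atTop.comp hf
  have hloglog : Tendsto (fun c => log (log (f c)) / log (f c)) atTop (𝓝 0) :=
    isLittleO_log_id_atTop.tendsto_div_nhds_zero.comp hlogf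
  have hlogr : Tendsto (fun c => log (f c * log (f c) / c) / log (f c)) atTop (𝓝 0) := by
    have := (continuousAt_log one_ne_zero).tendsto.comp h
    rw [log_one] at this
    exact this.div_atTop hlogf
  have heq : ∀ᶠ c in atTop, 1 + log (log (f c)) / log (f c) -
      log (f c * log (f c) / c) / log (f c) = log c / log (f c) := by
    filter_upwards [eventually_gt_atTop 0, hlogf.eventually_gt_atTop 0] with c hc hfc
    have hf0 : f c ≠ 0 := by rintro h0; simp [h0] at hfc
    rw [log_div (mul_ne_zero hf0 hfc.ne') hc.ne', log_mul hf0 hfc.ne']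
    field_simp
    ring
  simpa using ((tendsto_const_nhds.add hloglog).sub hlogr).congr' heq

section Solution

variable {M : ℝ} {L : ℝ → ℝ} (hM : 0 ≤ M)
  (hL : ∀ c : ℝ, 0 < c → M < L c ∧ L c = M + exp (c / L c))
include hM hL

theorem mul_log_sub_eq_of_forall_eq_add_exp (c : ℝ) (hc : 0 < c) : L c * log (L c - M) = c :=
  mul_log_sub_eq_of_eq_add_exp (hM.trans_lt (hL c hc).1).ne' (hL c hc).2

theorem tendsto_atTop_of_forall_eq_add_exp : Tendsto L atTop atTop := by
  refine tendsto_atTop_mono' atTop ?_ tendsto_sqrt_atTop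
  filter_upwards [eventually_gt_atTop 0] with c hc
  exact (sqrt_le_left (hM.trans (hL c hc).1.le)).mpr <|
    le_sq_of_mul_log_sub_eq hM (hL c hc).1 (mul_log_sub_eq_of_forall_eq_add_exp hM hL c hc)

theorem tendsto_mul_log_div_of_forall_eq_add_exp :
    Tendsto (fun c => L c * log (L c) / c) atTop (𝓝 1) := by
  have hLM : Tendsto (fun c => L c - M) atTop atTop :=
    tendsto_atTop_add_const_right _ _ (tendsto_atTop_of_forall_eq_add_exp hM hL)
  refine ((tendsto_log_add_div_log M).comp hLM).congr' ?_
  filter_upwards [eventually_gt_atTop 0] with c hc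
  have hlog : log (L c - M) ≠ 0 := by
    intro h0
    have := mul_log_sub_eq_of_forall_eq_add_exp hM hL c hc
    rw [h0, mul_zero] at this
    exact hc.ne this
  rw [Function.comp_apply, sub_add_cancel, div_eq_div_iff hlog hc.ne']
  linear_combination -log (L c) * mul_log_sub_eq_of_forall_eq_add_exp hM hL c hc

end Solution

/-- **Asymptotics of the implicit threshold equation.**  Fix `M ≥ 0`.  For every
`c > 0` there exists a unique `L > M` with `L = M + exp (c / L)`; any such choice function
`c ↦ L c` satisfies `L c * log (L c - M) = c`, `L c * log (L c) / c → 1` as `c → ∞`, and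
`L c ≤ (c / log c) (1 + o(1))` as `c → ∞`. -/
theorem implicit_threshold_asymptotics (M : ℝ) (hM : 0 ≤ M) :
    (∀ c : ℝ, 0 < c → ∃! L : ℝ, M < L ∧ L = M + Real.exp (c / L)) ∧
    (∀ L : ℝ → ℝ, (∀ c : ℝ, 0 < c → M < L c ∧ L c = M + Real.exp (c / L c)) →
      (∀ c : ℝ, 0 < c → L c * Real.log (L c - M) = c) ∧
      Tendsto (fun c => L c * Real.log (L c) / c) atTop (nhds 1) ∧
      ∃ g : ℝ → ℝ, Tendsto g atTop (nhds 1) ∧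
        ∀ᶠ c in atTop, L c ≤ c / Real.log c * g c) := by
  refine ⟨fun c hc => existsUnique_eq_add_exp_div hM hc.le, fun L hL => ?_⟩
  have hLtop := tendsto_atTop_of_forall_eq_add_exp hM hL
  have hratio := tendsto_mul_log_div_of_forall_eq_add_exp hM hL
  have hlog := tendsto_log_div_log_of_tendsto_mul_log_div hLtop hratio
  refine ⟨mul_log_sub_eq_of_forall_eq_add_exp hM hL, hratio, fun c => L c * log c / c, ?_, ?_⟩
  · refine (by simpa using hratio.mul hlog : Tendsto _ _ (𝓝 (1 : ℝ))).congr' ?_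
    filter_upwards [hLtop.eventually_gt_atTop 1] with c hc
    have := log_pos hc
    field_simp
  · filter_upwards [eventually_gt_atTop 1] with c hc
    have := log_pos hc
    exact (by field_simp : c / log c * (L c * log c / c) = L c).ge
end
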